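/- arXiv:0711.4829 — 2 statements merged into one kernel-verified Lean document; each statement's English description precedes it below -/
import Mathlib

section
/- Let Γ be a finite simple graph on n vertices with maximum degree at most Δ, where Δ ≥ 1, and let η ∈ [0,1] be a real parameter. Then at least one of the following holds: (IS) Γ contains an independent set with at least (1 − η)·n vertices; or (IM) Γ contains an induced matching with at least (η/(2Δ))·n edges. -/
open Classical in
lemma aux_greedy {V : Type} [Fintype V] (Γ : SimpleGraph V) [DecidableRel Γ.Adj]
    (Δ : ℕ) (hdeg : ∀ v, Γ.degree v ≤ Δ) (S : Finset V) :
    ∃ (P : Finset (V × V)) (I : Finset V),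
      (∀ p ∈ P, Γ.Adj p.1 p.2 ∧ p.1 ∈ S ∧ p.2 ∈ S) ∧
      (∀ p ∈ P, ∀ q ∈ P, p ≠ q → ∀ a, (a = p.1 ∨ a = p.2) →
        ∀ b, (b = q.1 ∨ b = q.2) → a ≠ b ∧ ¬ Γ.Adj a b) ∧
      (∀ v ∈ I, ∀ w ∈ I, ¬ Γ.Adj v w) ∧
      S.card ≤ I.card + 2 * Δ * P.card := by
  induction S using Finset.strongInduction with
  | _ S ih =>
    by_cases hE : ∃ u ∈ S, ∃ v ∈ S, Γ.Adj u v
    · obtain ⟨u, hu, v, hv, huv⟩ := hE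
      classical
      set T : Finset V := Γ.neighborFinset u ∪ Γ.neighborFinset v with hT
      have huT : u ∈ T := by
        simp [hT, SimpleGraph.mem_neighborFinset, huv.symm]
      have hvT : v ∈ T := by
        simp [hT, SimpleGraph.mem_neighborFinset, huv]
      have hTcard : T.card ≤ 2 * Δ := by
        calc T.card ≤ (Γ.neighborFinset u).card + (Γ.neighborFinset v).card :=
              Finset.card_union_le _ _
          _ ≤ Δ + Δ := by
              have := hdeg u; have := hdeg v
              simp only [SimpleGraph.card_neighborFinset_eq_degree]
              omega
          _ = 2 * Δ := by ring
      have hSsub : S \ T ⊂ S := by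
        refine Finset.ssubset_iff_of_subset Finset.sdiff_subset |>.mpr ⟨u, hu, by simp [huT]⟩
      obtain ⟨P, I, hP1, hP2, hI, hcard⟩ := ih (S \ T) hSsub
      -- key: endpoints of P lie in S \ T, hence not adjacent to u,v and distinct from them
      have hfar : ∀ a ∈ S \ T, a ≠ u ∧ a ≠ v ∧ ¬ Γ.Adj a u ∧ ¬ Γ.Adj a v := by
        intro a ha
        rw [Finset.mem_sdiff] at ha
        have hna : a ∉ T := ha.2
        simp only [hT, Finset.mem_union, SimpleGraph.mem_neighborFinset] at hna
        push_neg at hna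
        refine ⟨?_, ?_, fun h => hna.1 h.symm, fun h => hna.2 h.symm⟩
        · rintro rfl; exact absurd huT ha.2
        · rintro rfl; exact absurd hvT ha.2
      have huvP : (u, v) ∉ P := by
        intro h
        have := (hP1 _ h).2.1
        exact ((hfar u this).1 rfl)
      refine ⟨insert (u, v) P, I, ?_, ?_, hI, ?_⟩
      · intro p hp
        rcases Finset.mem_insert.mp hp with rfl | hp
        · exact ⟨huv, hu, hv⟩
        · obtain ⟨h1, h2, h3⟩ := hP1 p hp
          exact ⟨h1, (Finset.mem_sdiff.mp h2).1, (Finset.mem_sdiff.mp h3).1⟩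
      · intro p hp q hq hpq a ha b hb
        rcases Finset.mem_insert.mp hp with rfl | hp <;>
          rcases Finset.mem_insert.mp hq with rfl | hq
        · exact absurd rfl hpq
        · -- p = (u,v), q ∈ P ; b is endpoint of q, in S \ T
          have hbS : b ∈ S \ T := by
            rcases hb with rfl | rfl
            exacts [(hP1 q hq).2.1, (hP1 q hq).2.2]
          obtain ⟨h1, h2, h3, h4⟩ := hfar b hbS
          rcases ha with rfl | rfl
          · exact ⟨fun h => h1 h.symm, fun h => h3 h.symm⟩
          · exact ⟨fun h => h2 h.symm, fun h => h4 h.symm⟩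
        · have haS : a ∈ S \ T := by
            rcases ha with rfl | rfl
            exacts [(hP1 p hp).2.1, (hP1 p hp).2.2]
          obtain ⟨h1, h2, h3, h4⟩ := hfar a haS
          rcases hb with rfl | rfl
          · exact ⟨h1, h3⟩
          · exact ⟨h2, h4⟩
        · exact hP2 p hp q hq hpq a ha b hb
      · have h1 : S.card ≤ (S \ T).card + T.card := by
          have := Finset.card_sdiff_add_card S T
          have := Finset.card_le_card (Finset.subset_union_left : S ⊆ S ∪ T)
          omega
        have hm : 2 * Δ * (insert (u, v) P).card = 2 * Δ * P.card + 2 * Δ := by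
          rw [Finset.card_insert_of_notMem huvP]; ring
        omega
    · exact ⟨∅, S, by simp, by simp, fun a ha b hb hab => hE ⟨a, ha, b, hb, hab⟩,
        by simp⟩

/-- A graph of maximum degree at most `Δ` on `n` vertices contains either an
independent set with at least `(1 - η) n` vertices or an induced matching with
at least `(η / (2Δ)) n` edges. -/
theorem stmt_9 (V : Type) [Fintype V] (Γ : SimpleGraph V) [DecidableRel Γ.Adj]
    (n : ℕ) (hn : Fintype.card V = n)
    (Δ : ℕ) (hΔ : 1 ≤ Δ) (hdeg : ∀ v, Γ.degree v ≤ Δ)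
    (η : ℝ) (hη : η ∈ Set.Icc (0 : ℝ) 1) :
    (∃ I : Finset V, (∀ v ∈ I, ∀ w ∈ I, ¬ Γ.Adj v w) ∧ (1 - η) * (n : ℝ) ≤ (I.card : ℝ)) ∨
    (∃ M : Γ.Subgraph, M.IsMatching ∧ M.IsInduced ∧
      η / (2 * (Δ : ℝ)) * (n : ℝ) ≤ (M.edgeSet.ncard : ℝ)) := by
  classical
  obtain ⟨P, I, hP1, hP2, hI, hcard⟩ := aux_greedy Γ Δ hdeg Finset.univ
  rw [Finset.card_univ, hn] at hcard
  by_cases hc : (η * n : ℝ) ≤ 2 * Δ * P.card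
  · -- induced matching case
    right
    refine ⟨{ verts := {x | ∃ p ∈ P, x = p.1 ∨ x = p.2}
              Adj := fun a b => ∃ p ∈ P, (a = p.1 ∧ b = p.2) ∨ (a = p.2 ∧ b = p.1)
              adj_sub := by
                rintro a b ⟨p, hp, ⟨rfl, rfl⟩ | ⟨rfl, rfl⟩⟩
                · exact (hP1 p hp).1
                · exact (hP1 p hp).1.symm
              edge_vert := by
                rintro a b ⟨p, hp, ⟨rfl, rfl⟩ | ⟨rfl, rfl⟩⟩
                · exact ⟨p, hp, Or.inl rfl⟩
                · exact ⟨p, hp, Or.inr rfl⟩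
              symm := by
                constructor
                rintro a b ⟨p, hp, ⟨rfl, rfl⟩ | ⟨rfl, rfl⟩⟩
                · exact ⟨p, hp, Or.inr ⟨rfl, rfl⟩⟩
                · exact ⟨p, hp, Or.inl ⟨rfl, rfl⟩⟩ }, ?_, ?_, ?_⟩
    · -- IsMatching
      rintro v ⟨p, hp, hv⟩
      have hne : p.1 ≠ p.2 := (hP1 p hp).1.ne
      -- the partner of v
      refine ⟨if v = p.1 then p.2 else p.1, ?_, ?_⟩
      · rcases hv with rfl | rfl
        · simp only [if_pos rfl]; exact ⟨p, hp, Or.inl ⟨rfl, rfl⟩⟩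
        · simp only [if_neg (Ne.symm hne)]; exact ⟨p, hp, Or.inr ⟨rfl, rfl⟩⟩
      · rintro w ⟨q, hq, hw⟩
        by_cases hpq : p = q
        · subst hpq
          rcases hv with rfl | rfl
          · rcases hw with ⟨h1, rfl⟩ | ⟨h1, rfl⟩
            · simp
            · exact absurd h1 hne
          · rcases hw with ⟨h1, rfl⟩ | ⟨h1, rfl⟩
            · exact absurd h1 (Ne.symm hne)
            · simp [if_neg (Ne.symm hne)]
        · -- v is an endpoint of both p and q : contradiction
          exfalso
          have hv' : v = q.1 ∨ v = q.2 := by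
            rcases hw with ⟨h, _⟩ | ⟨h, _⟩
            · exact Or.inl h
            · exact Or.inr h
          exact (hP2 p hp q hq hpq v hv v hv').1 rfl
    · -- IsInduced
      rintro v ⟨p, hp, hv⟩ w ⟨q, hq, hw⟩ hadj
      by_cases hpq : p = q
      · subst hpq
        have hne : v ≠ w := hadj.ne
        rcases hv with rfl | rfl <;> rcases hw with rfl | rfl
        · exact absurd rfl hne
        · exact ⟨p, hp, Or.inl ⟨rfl, rfl⟩⟩
        · exact ⟨p, hp, Or.inr ⟨rfl, rfl⟩⟩
        · exact absurd rfl hne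
      · exact absurd hadj (hP2 p hp q hq hpq v hv w hw).2
    · -- cardinality
      have hinj : Set.InjOn (fun p : V × V => s(p.1, p.2)) P := by
        intro p hp q hq h
        simp only [Sym2.eq, Sym2.rel_iff', Prod.mk.injEq, Prod.swap_prod_mk] at h
        rcases h with ⟨h1, h2⟩ | ⟨h1, h2⟩
        · exact Prod.ext h1 h2
        · by_contra hpq
          exact (hP2 p hp q hq hpq p.1 (Or.inl rfl) q.2 (Or.inr rfl)).1 h1
      have key : ∀ M : Γ.Subgraph, (∀ p ∈ P, M.Adj p.1 p.2) →
          (P.card : ℝ) ≤ (M.edgeSet.ncard : ℝ) := by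
        intro M hM
        have hsub : ((P.image (fun p : V × V => s(p.1, p.2))) : Set (Sym2 V)) ⊆
            M.edgeSet := by
          intro e he
          simp only [Finset.coe_image, Set.mem_image, Finset.mem_coe] at he
          obtain ⟨p, hp, rfl⟩ := he
          exact (SimpleGraph.Subgraph.mem_edgeSet).mpr (hM p hp)
        have hle : P.card ≤ M.edgeSet.ncard := by
          calc P.card = (P.image (fun p : V × V => s(p.1, p.2))).card :=
                (Finset.card_image_of_injOn hinj).symm
            _ = ((P.image (fun p : V × V => s(p.1, p.2))) : Set (Sym2 V)).ncard :=
                (Set.ncard_coe_finset _).symm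
            _ ≤ M.edgeSet.ncard := Set.ncard_le_ncard hsub (Set.toFinite _)
        exact_mod_cast hle
      refine le_trans ?_ (key _ (fun p hp => ⟨p, hp, Or.inl ⟨rfl, rfl⟩⟩))
      have hΔpos : (0 : ℝ) < 2 * Δ := by
        have : (1 : ℝ) ≤ Δ := by exact_mod_cast hΔ
        linarith
      rw [div_mul_eq_mul_div, div_le_iff₀ hΔpos]
      nlinarith [hc]
  · left
    refine ⟨I, hI, ?_⟩
    push_neg at hc
    have h1 : (n : ℝ) ≤ I.card + 2 * Δ * P.card := by
      have := hcard
      push_cast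
      exact_mod_cast this
    nlinarith [hc, h1]
end

section
/- There exists a constant C > 0 such that for every integer n ≥ 3 there is a connected simple graph on exactly n vertices that contains no clique on 4 vertices and in which every induced tree has at most C·log n vertices. -/
namespace Stmt10Aux

open SimpleGraph

/-- Adjacency of heap-edges: nodes `a b ≥ 1` of the heap-tree (edge `k` joins `k` to
`(k-1)/2`) share an endpoint. -/
def Rel (a b : ℕ) : Prop :=
  (a - 1) / 2 = (b - 1) / 2 ∨ (a - 1) / 2 = b ∨ (b - 1) / 2 = a

/-- The line graph of the balanced binary heap tree on `n+1` nodes, on vertex set `Fin n`: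
vertex `i` is the tree edge from node `i+1` to its parent. -/
def heapG (n : ℕ) : SimpleGraph (Fin n) where
  Adj i j := i ≠ j ∧ Rel (i.val + 1) (j.val + 1)
  symm := ⟨by
    intro i j ⟨h1, h2⟩
    exact ⟨h1.symm, by unfold Rel at *; tauto⟩⟩
  loopless := ⟨fun i h => h.1 rfl⟩

lemma heapG_adj {n : ℕ} {i j : Fin n} :
    (heapG n).Adj i j ↔ i ≠ j ∧ Rel (i.val + 1) (j.val + 1) := Iff.rfl

lemma heapG_connected (n : ℕ) (hn : 3 ≤ n) : (heapG n).Connected := by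
  rw [connected_iff_exists_forall_reachable]
  refine ⟨⟨0, by omega⟩, fun w => ?_⟩
  suffices h : ∀ m : ℕ, ∀ w : Fin n, w.val ≤ m → (heapG n).Reachable ⟨0, by omega⟩ w by
    exact h w.val w le_rfl
  intro m
  induction m with
  | zero =>
    intro w hw
    have : w = ⟨0, by omega⟩ := Fin.ext (by simp; omega)
    rw [this]
  | succ m ih =>
    intro w hw
    by_cases h0 : w.val ≤ m
    · exact ih w h0
    have hwv : w.val = m + 1 := by omega
    by_cases h1 : w.val = 1
    · refine Adj.reachable ?_
      rw [heapG_adj]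
      refine ⟨?_, ?_⟩
      · intro hEq
        have := congrArg Fin.val hEq
        simp at this; omega
      · unfold Rel; left; simp; omega
    · -- w.val ≥ 2; connect to parent edge
      have hw2 : 2 ≤ w.val := by omega
      set q := ((w.val + 1) - 1) / 2 with hq
      have hq1 : 1 ≤ q ∧ q - 1 < w.val ∧ q - 1 < n := by
        have := w.isLt; omega
      refine Reachable.trans (ih ⟨q - 1, by omega⟩ (by simp; omega)) (Adj.reachable ?_)
      rw [heapG_adj]
      constructor
      · intro hEq
        have := congrArg Fin.val hEq
        simp at this; omega
      · unfold Rel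
        right; right
        simp
        omega

lemma heapG_cliqueFree (n : ℕ) : (heapG n).CliqueFree 4 := by
  intro t ht
  obtain ⟨hclique, hcard⟩ := ht
  have h0 : t.Nonempty := by rw [← Finset.card_pos, hcard]; norm_num
  obtain ⟨a, ha⟩ := h0
  have h3 : (t.erase a).card = 3 := by rw [Finset.card_erase_of_mem ha, hcard]
  obtain ⟨b, c, d, hbc, hbd, hcd, habcd⟩ := Finset.card_eq_three.mp h3
  have hb : b ∈ t.erase a := by rw [habcd]; simp
  have hc : c ∈ t.erase a := by rw [habcd]; simp
  have hd : d ∈ t.erase a := by rw [habcd]; simp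
  have hab : a ≠ b := (Finset.ne_of_mem_erase hb).symm
  have hac : a ≠ c := (Finset.ne_of_mem_erase hc).symm
  have had : a ≠ d := (Finset.ne_of_mem_erase hd).symm
  have hbt := Finset.mem_of_mem_erase hb
  have hct := Finset.mem_of_mem_erase hc
  have hdt := Finset.mem_of_mem_erase hd
  have e1 := (hclique ha hbt hab).2
  have e2 := (hclique ha hct hac).2
  have e3 := (hclique ha hdt had).2
  have e4 := (hclique hbt hct hbc).2
  have e5 := (hclique hbt hdt hbd).2
  have e6 := (hclique hct hdt hcd).2
  have v1 : a.val ≠ b.val := fun h => hab (Fin.ext h)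
  have v2 : a.val ≠ c.val := fun h => hac (Fin.ext h)
  have v3 : a.val ≠ d.val := fun h => had (Fin.ext h)
  have v4 : b.val ≠ c.val := fun h => hbc (Fin.ext h)
  have v5 : b.val ≠ d.val := fun h => hbd (Fin.ext h)
  have v6 : c.val ≠ d.val := fun h => hcd (Fin.ext h)
  unfold Rel at e1 e2 e3 e4 e5 e6
  omega

/-- The claw lemma: a vertex of `heapG` cannot have three pairwise nonadjacent neighbours. -/
lemma heapG_claw {n : ℕ} {w a b c : Fin n}
    (hwa : (heapG n).Adj w a) (hwb : (heapG n).Adj w b) (hwc : (heapG n).Adj w c)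
    (nab : ¬ (heapG n).Adj a b) (nac : ¬ (heapG n).Adj a c) (nbc : ¬ (heapG n).Adj b c)
    (hab : a ≠ b) (hac : a ≠ c) (hbc : b ≠ c) : False := by
  rw [heapG_adj] at hwa hwb hwc nab nac nbc
  have v1 : a.val ≠ b.val := fun h => hab (Fin.ext h)
  have v2 : a.val ≠ c.val := fun h => hac (Fin.ext h)
  have v3 : b.val ≠ c.val := fun h => hbc (Fin.ext h)
  have r1 := hwa.2
  have r2 := hwb.2
  have r3 := hwc.2
  have n1 : ¬ Rel (a.val + 1) (b.val + 1) := fun h => nab ⟨hab, h⟩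
  have n2 : ¬ Rel (a.val + 1) (c.val + 1) := fun h => nac ⟨hac, h⟩
  have n3 : ¬ Rel (b.val + 1) (c.val + 1) := fun h => nbc ⟨hbc, h⟩
  unfold Rel at r1 r2 r3 n1 n2 n3
  omega

/-- Growth along an "ascending" chain: each step halves. -/
lemma ascend (N : ℕ → ℕ) (c : ℕ) (hpos : ∀ i, i ≤ c → 1 ≤ N i)
    (hstep : ∀ i, i < c → (N i - 1) / 2 = N (i + 1)) : 2 ^ c ≤ N 0 := by
  have key : ∀ j, j ≤ c → 2 ^ j ≤ N (c - j) := by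
    intro j
    induction j with
    | zero => intro _; simpa using hpos c le_rfl
    | succ j ih =>
      intro hj
      have h1 := ih (by omega)
      have h2 := hstep (c - j - 1) (by omega)
      have e : c - j - 1 + 1 = c - j := by omega
      rw [e] at h2
      have h3 := hpos (c - j - 1) (by omega)
      have e2 : c - (j + 1) = c - j - 1 := by omega
      rw [e2, pow_succ]
      omega
  simpa using key c le_rfl

/-- Key combinatorial lemma: a (node-value sequence of an) induced path in `heapG`
has length at most `2 log₂ n + 1`. -/
lemma arith {n t : ℕ} (hn : 1 ≤ n) (N : ℕ → ℕ)
    (hpos : ∀ i, i ≤ t → 1 ≤ N i) (hub : ∀ i, i ≤ t → N i ≤ n)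
    (hadj : ∀ i, i + 1 ≤ t → Rel (N i) (N (i + 1)))
    (hne2 : ∀ i, i + 2 ≤ t → N i ≠ N (i + 2))
    (hnadj2 : ∀ i, i + 2 ≤ t → ¬ Rel (N i) (N (i + 2))) :
    t ≤ 2 * Nat.log 2 n + 1 := by
  classical
  have L1 : ∀ i, i + 2 ≤ t →
      ((N (i + 1) - 1) / 2 = N i ∨ (N (i + 1) - 1) / 2 = (N i - 1) / 2) →
      (N (i + 2) - 1) / 2 = N (i + 1) := by
    intro i h2 hsd
    have h1 := hadj (i + 1) (by omega)
    have hE : i + 1 + 1 = i + 2 := by omega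
    rw [hE] at h1
    have h3 := hne2 i h2
    have h4 := hnadj2 i h2
    unfold Rel at h1 h4
    omega
  by_cases hA : ∀ i, i + 1 ≤ t → (N i - 1) / 2 = N (i + 1)
  · have h := ascend N t (fun i hi => hpos i hi) (fun i hi => hA i (by omega))
    have h9 := hub 0 (by omega)
    have := (Nat.le_log_iff_pow_le (by norm_num) (by omega)).mpr (le_trans h h9)
    omega
  · push_neg at hA
    have hex : ∃ i, i + 1 ≤ t ∧ (N i - 1) / 2 ≠ N (i + 1) := hA
    obtain ⟨c, hcmin, hc1, hc2⟩ : ∃ c, (∀ i, i < c → ¬(i + 1 ≤ t ∧ (N i - 1) / 2 ≠ N (i + 1)))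
        ∧ c + 1 ≤ t ∧ (N c - 1) / 2 ≠ N (c + 1) :=
      ⟨Nat.find hex, fun i hi => Nat.find_min hex hi, (Nat.find_spec hex).1,
        (Nat.find_spec hex).2⟩
    have hpre : ∀ i, i < c → (N i - 1) / 2 = N (i + 1) := by
      intro i hi
      by_contra hne
      exact hcmin i hi ⟨by omega, hne⟩
    have hasc := ascend N c (fun i hi => hpos i (by omega)) hpre
    have hclog : c ≤ Nat.log 2 n :=
      (Nat.le_log_iff_pow_le (by norm_num) (by omega)).mpr
        (le_trans hasc (hub 0 (by omega)))
    -- step c is a sibling or descend step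
    have hsd : (N (c + 1) - 1) / 2 = N c ∨ (N (c + 1) - 1) / 2 = (N c - 1) / 2 := by
      have := hadj c hc1
      unfold Rel at this
      omega
    have hall : ∀ k, c ≤ k → k + 1 ≤ t →
        ((N (k + 1) - 1) / 2 = N k ∨ (N (k + 1) - 1) / 2 = (N k - 1) / 2) := by
      intro k hk
      induction k, hk using Nat.le_induction with
      | base => intro _; exact hsd
      | succ k hk ih =>
        intro hk2
        have h := L1 k (by omega) (ih (by omega))
        have hE : k + 1 + 1 = k + 2 := by omega
        rw [hE]
        exact Or.inl h
    have hD : ∀ k, c + 1 ≤ k → k + 1 ≤ t → (N (k + 1) - 1) / 2 = N k := by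
      intro k hk hk1
      have h2 := L1 (k - 1) (by omega) (hall (k - 1) (by omega) (by omega))
      have e1 : k - 1 + 2 = k + 1 := by omega
      have e2 : k - 1 + 1 = k := by omega
      rw [e1, e2] at h2
      exact h2
    have hdesc : 2 ^ (t - (c + 1)) ≤ N t := by
      by_cases hct : c + 1 ≤ t
      · have h := ascend (fun j => N (t - j)) (t - (c + 1))
          (fun i hi => hpos (t - i) (by omega))
          (fun i hi => by
            show (N (t - i) - 1) / 2 = N (t - (i + 1))
            have hd := hD (t - i - 1) (by omega) (by omega)
            have e1 : t - i - 1 + 1 = t - i := by omega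
            have e2 : t - (i + 1) = t - i - 1 := by omega
            rw [e1] at hd
            rw [e2]
            exact hd)
        simpa using h
      · have : t - (c + 1) = 0 := by omega
        rw [this]
        simpa using hpos t le_rfl
    have ht2 : t - (c + 1) ≤ Nat.log 2 n :=
      (Nat.le_log_iff_pow_le (by norm_num) (by omega)).mpr
        (le_trans hdesc (hub t le_rfl))
    omega

/-- In a path (as a walk), distinct indices give distinct vertices. -/
lemma getVert_ne {W : Type*} {H : SimpleGraph W} :
    ∀ {u v : W} (p : H.Walk u v), p.IsPath →
      ∀ i j, i < j → j ≤ p.length → p.getVert i ≠ p.getVert j := by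
  intro u v p
  induction p with
  | nil =>
    intro _ i j hij hj
    simp [Walk.length_nil] at hj
    omega
  | @cons a b c h q ih =>
    intro hp i j hij hj
    rw [Walk.length_cons] at hj
    rcases Nat.eq_zero_or_pos i with rfl | hi
    · rw [Walk.getVert_zero]
      have hnot : a ∉ q.support := ((Walk.cons_isPath_iff h q).mp hp).2
      rw [Walk.getVert_cons q h (by omega)]
      intro hEq
      exact hnot (Walk.mem_support_iff_exists_getVert.mpr ⟨j - 1, hEq.symm, by omega⟩)
    · obtain ⟨i', rfl⟩ : ∃ i', i = i' + 1 := ⟨i - 1, by omega⟩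
      obtain ⟨j', rfl⟩ : ∃ j', j = j' + 1 := ⟨j - 1, by omega⟩
      rw [Walk.getVert_cons_succ, Walk.getVert_cons_succ]
      exact ih ((Walk.cons_isPath_iff h q).mp hp).1 i' j' (by omega) (by omega)

/-- An acyclic graph has no triangle. -/
lemma no_triangle {W : Type*} {H : SimpleGraph W} (hac : H.IsAcyclic) {a b c : W}
    (hab : H.Adj a b) (hbc : H.Adj b c) (hca : H.Adj c a) : False := by
  refine hac (Walk.cons hab (Walk.cons hbc (Walk.cons hca Walk.nil))) ?_
  rw [Walk.cons_isCycle_iff]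
  constructor
  · rw [Walk.isPath_def]
    simp [hbc.ne, hab.ne', hca.ne]
  · simp only [Walk.edges_cons, Walk.edges_nil, List.mem_cons, List.not_mem_nil, or_false,
      Sym2.eq_iff]
    push_neg
    refine ⟨⟨fun _ => hbc.ne, ?_⟩, ⟨fun _ => hab.ne', ?_⟩⟩ <;> simp [hca.ne', hbc.ne]

/-- From a vertex at distance `d+1`, step down to a neighbour at distance `d`. -/
lemma exists_adj_dist {W : Type*} {H : SimpleGraph W} (hc : H.Connected) {x s : W} {d : ℕ}
    (hd : H.dist x s = d + 1) : ∃ w, H.Adj w s ∧ H.dist x w = d := by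
  obtain ⟨p, hp⟩ := hc.exists_walk_length_eq_dist x s
  rw [hd] at hp
  have hxs : s ≠ x := by
    intro h
    subst h
    rw [SimpleGraph.dist_self] at hd
    omega
  obtain ⟨w, hadj, q, hq⟩ := Walk.exists_eq_cons_of_ne hxs p.reverse
  refine ⟨w, hadj.symm, ?_⟩
  have hlq : q.length = d := by
    have := congrArg Walk.length hq
    rw [Walk.length_reverse, hp, Walk.length_cons] at this
    omega
  have h1 : H.dist x w ≤ d := by
    rw [SimpleGraph.dist_comm]
    exact hlq ▸ SimpleGraph.dist_le q
  have h2 : H.dist x s ≤ H.dist x w + H.dist w s := hc.dist_triangle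
  have h3 : H.dist w s ≤ 1 := by
    have : H.dist w s ≤ (Walk.cons hadj.symm Walk.nil).length := SimpleGraph.dist_le _
    simpa using this
  omega

end Stmt10Aux

open Stmt10Aux SimpleGraph in
/-- There is a constant `C > 0` such that for every `n ≥ 3` there is a connected
`K₄`-free graph on exactly `n` vertices whose induced trees all have at most
`C * log n` vertices. -/
theorem stmt_10 :
    ∃ C : ℝ, 0 < C ∧ ∀ n : ℕ, 3 ≤ n →
      ∃ G : SimpleGraph (Fin n), G.Connected ∧ G.CliqueFree 4 ∧
        ∀ S : Finset (Fin n), (G.induce (S : Set (Fin n))).IsTree →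
          (S.card : ℝ) ≤ C * Real.log n := by
  classical
  refine ⟨20, by norm_num, ?_⟩
  intro n hn
  refine ⟨heapG n, heapG_connected n hn, heapG_cliqueFree n, ?_⟩
  intro S hTree
  obtain ⟨hconn, hacyc⟩ := hTree
  set V' := ((S : Set (Fin n)) : Type) with hV'
  set H := (heapG n).induce (S : Set (Fin n)) with hH
  obtain ⟨x⟩ := hconn.nonempty
  -- H-adjacency transfers to heapG-adjacency
  have hadj_iff : ∀ a b : (S : Set (Fin n)), H.Adj a b ↔ (heapG n).Adj ↑a ↑b := by
    intro a b; rfl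
  -- triangle-freeness of H
  have htf : ∀ a b c : (S : Set (Fin n)), H.Adj a b → H.Adj b c → H.Adj c a → False :=
    fun a b c h1 h2 h3 => no_triangle hacyc h1 h2 h3
  -- claw-freeness transferred to H
  have hclawH : ∀ w a b c : (S : Set (Fin n)), H.Adj w a → H.Adj w b → H.Adj w c →
      a ≠ b → a ≠ c → b ≠ c → False := by
    intro w a b c h1 h2 h3 n1 n2 n3
    have na : ¬ (heapG n).Adj ↑a ↑b := by
      intro h; exact htf a b w ((hadj_iff a b).mpr h) h2.symm h1
    have nb : ¬ (heapG n).Adj ↑a ↑c := by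
      intro h; exact htf a c w ((hadj_iff a c).mpr h) h3.symm h1
    have nc : ¬ (heapG n).Adj ↑b ↑c := by
      intro h; exact htf b c w ((hadj_iff b c).mpr h) h3.symm h2
    exact heapG_claw ((hadj_iff w a).mp h1) ((hadj_iff w b).mp h2) ((hadj_iff w c).mp h3)
      na nb nc (fun h => n1 (Subtype.ext h))
      (fun h => n2 (Subtype.ext h))
      (fun h => n3 (Subtype.ext h))
  -- distances are bounded
  have hdistbound : ∀ s : (S : Set (Fin n)), H.dist x s ≤ 2 * Nat.log 2 n + 1 := by
    intro s
    obtain ⟨w⟩ := hconn x s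
    have hp : w.bypass.IsPath := Walk.bypass_isPath w
    set p := w.bypass with hpdef
    have hdle : H.dist x s ≤ p.length := SimpleGraph.dist_le p
    have hmain : p.length ≤ 2 * Nat.log 2 n + 1 := by
      apply arith (n := n) (t := p.length) (by omega) (fun i => ((p.getVert i : (S : Set (Fin n))) : Fin n).val + 1)
      · intro i _; omega
      · intro i _
        have := ((p.getVert i : (S : Set (Fin n))) : Fin n).isLt
        omega
      · intro i hi
        have h := p.adj_getVert_succ (by omega : i < p.length)
        exact ((hadj_iff _ _).mp h).2
      · intro i hi
        have h := getVert_ne p hp i (i + 2) (by omega) (by omega)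
        intro hEq
        apply h
        apply Subtype.ext
        apply Fin.ext
        omega
      · intro i hi hrel
        have hne := getVert_ne p hp i (i + 2) (by omega) (by omega)
        have hGadj : (heapG n).Adj ↑(p.getVert i) ↑(p.getVert (i + 2)) := by
          rw [heapG_adj]
          exact ⟨fun h => hne (Subtype.ext h), hrel⟩
        have h1 := p.adj_getVert_succ (by omega : i < p.length)
        have h2 := p.adj_getVert_succ (by omega : i + 1 < p.length)
        have : i + 1 + 1 = i + 2 := rfl
        rw [this] at h2
        exact htf _ _ _ h1 h2 ((hadj_iff _ _).mpr hGadj).symm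
    omega
  -- sphere cardinality bound
  have hsphere : ∀ d : ℕ,
      (Finset.univ.filter (fun s : (S : Set (Fin n)) => H.dist x s = d)).card ≤ 2 := by
    intro d
    induction d with
    | zero =>
      have hsub : (Finset.univ.filter (fun s : (S : Set (Fin n)) => H.dist x s = 0)) ⊆ {x} := by
        intro s hs
        rw [Finset.mem_filter] at hs
        rw [Finset.mem_singleton]
        exact (hconn.dist_eq_zero_iff.mp hs.2).symm
      calc _ ≤ ({x} : Finset _).card := Finset.card_le_card hsub
      _ ≤ 2 := by simp
    | succ d ih =>
      rcases Nat.eq_zero_or_pos d with rfl | hd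
      · -- distance-1 sphere: neighbours of x, pairwise nonadjacent
        by_contra hcon
        push_neg at hcon
        obtain ⟨a, b, c, ha, hb, hc, nab, nac, nbc⟩ := Finset.two_lt_card_iff.mp hcon
        rw [Finset.mem_filter] at ha hb hc
        have hax : H.Adj x a := by
          obtain ⟨w, hw1, hw2⟩ := exists_adj_dist hconn ha.2
          have : w = x := hconn.dist_eq_zero_iff.mp hw2 |>.symm
          rw [this] at hw1; exact hw1
        have hbx : H.Adj x b := by
          obtain ⟨w, hw1, hw2⟩ := exists_adj_dist hconn hb.2
          have : w = x := hconn.dist_eq_zero_iff.mp hw2 |>.symm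
          rw [this] at hw1; exact hw1
        have hcx : H.Adj x c := by
          obtain ⟨w, hw1, hw2⟩ := exists_adj_dist hconn hc.2
          have : w = x := hconn.dist_eq_zero_iff.mp hw2 |>.symm
          rw [this] at hw1; exact hw1
        exact hclawH x a b c hax hbx hcx nab nac nbc
      · -- injection into the previous sphere
        obtain ⟨d', rfl⟩ : ∃ d', d = d' + 1 := ⟨d - 1, by omega⟩
        refine le_trans ?_ ih
        apply Finset.card_le_card_of_injOn
          (fun s => if h : ∃ w, H.Adj w s ∧ H.dist x w = d' + 1 then h.choose else x)
        · intro s hs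
          rw [Finset.mem_coe, Finset.mem_filter] at hs
          have hex : ∃ w, H.Adj w s ∧ H.dist x w = d' + 1 := exists_adj_dist hconn hs.2
          beta_reduce
          rw [dif_pos hex, Finset.mem_coe, Finset.mem_filter]
          exact ⟨Finset.mem_univ _, hex.choose_spec.2⟩
        · intro s1 hs1 s2 hs2 hEq
          simp only [Finset.coe_filter, Set.mem_setOf_eq] at hs1 hs2
          by_contra hne
          have hex1 : ∃ w, H.Adj w s1 ∧ H.dist x w = d' + 1 := exists_adj_dist hconn hs1.2
          have hex2 : ∃ w, H.Adj w s2 ∧ H.dist x w = d' + 1 := exists_adj_dist hconn hs2.2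
          dsimp only at hEq
          rw [dif_pos hex1, dif_pos hex2] at hEq
          set w := hex1.choose with hw
          have hw1 := hex1.choose_spec
          have hw2 := hex2.choose_spec
          rw [← hEq] at hw2
          obtain ⟨u, hu1, hu2⟩ := exists_adj_dist hconn hw1.2
          have hus1 : u ≠ s1 := by
            intro h; rw [h] at hu2; rw [hu2] at hs1; omega
          have hus2 : u ≠ s2 := by
            intro h; rw [h] at hu2; rw [hu2] at hs2; omega
          exact hclawH w s1 s2 u hw1.1 hw2.1 hu1.symm hne hus1.symm hus2.symm
  -- assemble the cardinality bound
  have hcardNat : S.card ≤ 4 * Nat.log 2 n + 4 := by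
    have hcard1 : S.card = (Finset.univ : Finset (S : Set (Fin n))).card := by
      rw [Finset.card_univ]
      rw [Fintype.card_congr (Equiv.subtypeEquivRight (fun z => Finset.mem_coe))]
      exact (Fintype.card_coe S).symm
    have hsub : (Finset.univ : Finset (S : Set (Fin n))) ⊆
        (Finset.range (2 * Nat.log 2 n + 2)).biUnion
          (fun d => Finset.univ.filter (fun s : (S : Set (Fin n)) => H.dist x s = d)) := by
      intro s _
      rw [Finset.mem_biUnion]
      refine ⟨H.dist x s, ?_, ?_⟩
      · rw [Finset.mem_range]
        have := hdistbound s
        omega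
      · simp
    calc S.card = (Finset.univ : Finset (S : Set (Fin n))).card := hcard1
    _ ≤ ((Finset.range (2 * Nat.log 2 n + 2)).biUnion
          (fun d => Finset.univ.filter (fun s : (S : Set (Fin n)) => H.dist x s = d))).card :=
        Finset.card_le_card hsub
    _ ≤ ∑ d ∈ Finset.range (2 * Nat.log 2 n + 2),
          (Finset.univ.filter (fun s : (S : Set (Fin n)) => H.dist x s = d)).card :=
        Finset.card_biUnion_le
    _ ≤ ∑ _d ∈ Finset.range (2 * Nat.log 2 n + 2), 2 :=
        Finset.sum_le_sum (fun d _ => hsphere d)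
    _ = 2 * (2 * Nat.log 2 n + 2) := by
        rw [Finset.sum_const, Finset.card_range]; ring
    _ = 4 * Nat.log 2 n + 4 := by ring
  -- convert to the real bound
  have hL : ((Nat.log 2 n : ℕ) : ℝ) ≤ 2 * Real.log n := by
    have h1 : ((2 : ℕ) : ℝ) ^ (Nat.log 2 n) ≤ (n : ℝ) := by
      exact_mod_cast Nat.pow_log_le_self 2 (by omega)
    have h2 := Real.log_le_log (by positivity) h1
    rw [Real.log_pow] at h2
    have h3 : (0.6931471803 : ℝ) < Real.log 2 := Real.log_two_gt_d9
    have h4 : (0 : ℝ) ≤ ((Nat.log 2 n : ℕ) : ℝ) := by positivity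
    push_cast at h2 ⊢
    nlinarith
  have hln : (1 : ℝ) ≤ Real.log n := by
    rw [Real.le_log_iff_exp_le (by positivity)]
    calc Real.exp 1 ≤ 2.7182818286 := le_of_lt Real.exp_one_lt_d9
    _ ≤ 3 := by norm_num
    _ ≤ (n : ℝ) := by exact_mod_cast hn
  have : (S.card : ℝ) ≤ 4 * ((Nat.log 2 n : ℕ) : ℝ) + 4 := by exact_mod_cast hcardNat
  calc (S.card : ℝ) ≤ 4 * ((Nat.log 2 n : ℕ) : ℝ) + 4 := this
  _ ≤ 4 * (2 * Real.log n) + 4 * Real.log n := by nlinarith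
  _ ≤ 20 * Real.log n := by nlinarith
end
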